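/- arXiv:2012.10897 — 2 statements merged into one kernel-verified Lean document; each statement's English description precedes it below -/
import Mathlib

section
/- Consider the binary symmetric channel with crossover probability p_f ∈ (0, 1/4): a transmitted word x ∈ {0,1}^n is received as Y(x) ∈ {0,1}^n where each bit is flipped independently with probability p_f and no erasures occur. If α satisfies H(2p_f) < α ≤ 1 and {D_n} is any sequence of dictionaries D_n ⊆ {0,1}^n with #D_n ≥ 2^{αn}, then every rate 0 < R < α − H(2p_f) is achievable using these dictionaries: for every ε > 0 and all sufficiently large n there exist a code C_n ⊆ D_n with #C_n ≥ 2^{nR} and a decoder g_n : {0,1}^n → C_n such that max_{x ∈ C_n} P(g_n(Y(x)) ≠ x) < ε. -/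
open scoped Classical BigOperators

/-- The binary entropy function `H(x) = -x log₂ x - (1-x) log₂ (1-x)`. -/
noncomputable def binEnt (x : ℝ) : ℝ :=
  -(x * Real.logb 2 x) - (1 - x) * Real.logb 2 (1 - x)

/-- Probability of the flip pattern `w : Fin n → Bool` for a binary symmetric
channel with crossover probability `pf`: each bit is flipped independently with
probability `pf`. -/
noncomputable def bscNoiseProb {n : ℕ} (pf : ℝ) (w : Fin n → Bool) : ℝ :=
  ∏ i, (if w i then pf else 1 - pf)

/-- Error probability `P(g(Y(x)) ≠ x)` of a decoder `g` on the transmitted word `x`,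
where the output of the BSC is `Y(x) = x ⊕ w` for the random flip pattern `w`. -/
noncomputable def bscErrProb {n : ℕ} (pf : ℝ)
    (g : (Fin n → Bool) → (Fin n → Bool)) (x : Fin n → Bool) : ℝ :=
  ∑ w ∈ Finset.univ.filter (fun w : Fin n → Bool => g (fun i => xor (x i) (w i)) ≠ x),
    bscNoiseProb pf w

/-!
Pick `δ ∈ (2 p_f, 1/2)` with `H(δ) < α - R`. Greedily choosing codewords in the dictionary, each
choice discards at most a Hamming ball of radius `δ n`, which holds at most `2 ^ (n H(δ))` words;
this leaves at least `2 ^ (α n - n H(δ)) ≥ 2 ^ (n R)` codewords at pairwise distance `> δ n`.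
Nearest-codeword decoding corrects every flip pattern of weight at most `δ n / 2`, and since
`δ / 2 > p_f`, a Chernoff bound makes more flips exponentially unlikely.
-/

open Finset Real

def hammingWeight {n : ℕ} (w : Fin n → Bool) : ℕ := #{i | w i}

section BoolWords

variable {n : ℕ}

theorem hammingWeight_le (w : Fin n → Bool) : hammingWeight w ≤ n :=
  (card_filter_le _ _).trans_eq (card_fin n)

theorem prod_ite_eq_pow_hammingWeight (w : Fin n → Bool) (a b : ℝ) :
    ∏ i, (if w i then a else b) = a ^ hammingWeight w * b ^ (n - hammingWeight w) := by
  rw [prod_ite, prod_const, prod_const, filter_not, card_sdiff_of_subset (filter_subset _ _),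
    card_univ, Fintype.card_fin]
  rfl

theorem sum_prod_ite_eq_add_pow (a b : ℝ) :
    ∑ w : Fin n → Bool, ∏ i, (if w i then a else b) = (a + b) ^ n := by
  convert (Fintype.prod_sum (fun (_ : Fin n) (c : Bool) => if c then a else b)).symm using 1
  simp

theorem hammingWeight_xor (x y : Fin n → Bool) :
    hammingWeight (fun i => xor (x i) (y i)) = hammingDist x y := by
  unfold hammingWeight hammingDist
  congr 1
  ext i
  cases x i <;> cases y i <;> simp

theorem hammingDist_xor_right (x w : Fin n → Bool) :
    hammingDist x (fun i => xor (x i) (w i)) = hammingWeight w := by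
  simp [← hammingWeight_xor]

theorem bscNoiseProb_nonneg {pf : ℝ} (h0 : 0 ≤ pf) (h1 : pf ≤ 1) (w : Fin n → Bool) :
    0 ≤ bscNoiseProb pf w :=
  prod_nonneg fun i _ => by split <;> linarith

end BoolWords

section Chernoff

variable {n : ℕ} {p : ℝ}

theorem sum_bscNoiseProb_hammingWeight_ge_mul_pow_le (hp0 : 0 ≤ p) (hp1 : p ≤ 1) {l : ℝ}
    (hl : 1 ≤ l) (m : ℕ) :
    (∑ w : Fin n → Bool with m ≤ hammingWeight w, bscNoiseProb p w) * l ^ m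
      ≤ (p * l + (1 - p)) ^ n := by
  have hq : 0 ≤ 1 - p := by linarith
  rw [← sum_prod_ite_eq_add_pow, sum_mul]
  refine (sum_le_sum fun w hw => ?_).trans
    (sum_le_sum_of_subset_of_nonneg (filter_subset _ _) fun w _ _ => ?_)
  · rw [bscNoiseProb, prod_ite_eq_pow_hammingWeight, prod_ite_eq_pow_hammingWeight, mul_pow,
      mul_right_comm (p ^ _)]
    gcongr
    exact (mem_filter.1 hw).2
  · rw [prod_ite_eq_pow_hammingWeight]
    positivity

theorem exists_sum_bscNoiseProb_hammingWeight_ge_le_pow {t : ℝ} (hp : 0 < p) (hpt : p < t)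
    (ht : t < 1) :
    ∃ ρ : ℝ, 0 ≤ ρ ∧ ρ < 1 ∧ ∀ n m : ℕ, t * n ≤ m →
      ∑ w : Fin n → Bool with m ≤ hammingWeight w, bscNoiseProb p w ≤ ρ ^ n := by
  have ht0 : 0 < t := hp.trans hpt
  have hp1 : p ≤ 1 := by linarith
  have hq : 0 < 1 - p := by linarith
  have ht1 : 0 < 1 - t := by linarith
  set a := p / t
  set b := (1 - p) / (1 - t)
  have ha : 0 < a := by positivity
  have hb : 0 < b := by positivity
  have hab : a < b := by
    rw [div_lt_div_iff₀ ht0 ht1]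
    nlinarith
  have hmean : t * a + (1 - t) * b = 1 := by
    simp only [a, b]
    field_simp
    ring
  -- `l = b / a` is the optimal tilt `e^λ` in the exponential moment bound.
  set l := b / a
  have hl : 1 < l := (one_lt_div ha).2 hab
  have hpl : p * l + (1 - p) = b := by
    simp only [l, a, b]
    field_simp
    ring
  -- `ρ = exp (-D(t ‖ p))`, and `ρ < 1` is weighted AM-GM for `t a + (1 - t) b = 1`.
  refine ⟨a ^ t * b ^ (1 - t), by positivity, ?_, fun n m hm => ?_⟩
  · have := (geom_mean_lt_arith_mean2_weighted_iff_of_pos ht0 ht1 ha.le hb.le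
      (add_sub_cancel t 1)).2 hab.ne
    linarith
  have hlm : l ^ (t * n) ≤ l ^ m := by
    rw [← rpow_natCast]
    exact rpow_le_rpow_of_exponent_le hl.le hm
  have hρ : a ^ t * b ^ (1 - t) = b / l ^ t := by
    rw [div_rpow hb.le ha.le, rpow_sub hb, rpow_one]
    field_simp
  have hmoment := sum_bscNoiseProb_hammingWeight_ge_mul_pow_le (n := n) hp.le hp1 hl.le m
  rw [hpl] at hmoment
  rw [hρ, div_pow, le_div_iff₀ (by positivity), ← rpow_natCast (l ^ t), ← rpow_mul (by positivity)]
  exact (mul_le_mul_of_nonneg_left hlm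
    (sum_nonneg fun w _ => bscNoiseProb_nonneg hp.le hp1 w)).trans hmoment

end Chernoff

theorem binEnt_eq_binEntropy_div (x : ℝ) : binEnt x = binEntropy x / log 2 := by
  simp only [binEnt, binEntropy, logb, log_inv]
  ring

theorem continuous_binEnt : Continuous binEnt := by
  simpa only [funext binEnt_eq_binEntropy_div] using binEntropy_continuous.div_const _

theorem exists_mem_Ioo_binEnt_lt {x y c : ℝ} (hxy : x < y) (hx : binEnt x < c) :
    ∃ δ ∈ Set.Ioo x y, binEnt δ < c :=
  ((Filter.eventually_mem_set.2 (Ioo_mem_nhdsGT hxy)).and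
    (((continuous_binEnt.tendsto x).eventually_lt_const hx).filter_mono nhdsWithin_le_nhds)).exists

theorem two_rpow_neg_mul_binEnt {δ : ℝ} (h0 : 0 < δ) (h1 : δ < 1) (c : ℝ) :
    (2 : ℝ) ^ (-(c * binEnt δ)) = δ ^ (c * δ) * (1 - δ) ^ (c * (1 - δ)) := by
  have h1' : 0 < 1 - δ := by linarith
  rw [show -(c * binEnt δ) = logb 2 δ * (c * δ) + logb 2 (1 - δ) * (c * (1 - δ)) by
      simp only [binEnt]; ring,
    rpow_add two_pos, rpow_mul zero_le_two, rpow_mul zero_le_two, rpow_logb two_pos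
      one_lt_two.ne' h0, rpow_logb two_pos one_lt_two.ne' h1']

theorem card_hammingWeight_le_le_two_rpow {n s : ℕ} {δ : ℝ} (h0 : 0 < δ) (h1 : δ ≤ 1 / 2)
    (hs : s ≤ δ * n) :
    (#{w : Fin n → Bool | hammingWeight w ≤ s} : ℝ) ≤ 2 ^ (n * binEnt δ) := by
  have h1' : 0 < 1 - δ := by linarith
  -- Every word of weight `k ≤ δ n` is at least as likely under `Bernoulli(δ)` noise as a word of
  -- weight exactly `δ n`, whose probability is `2 ^ (-n H(δ))`.
  have hlikely : ∀ w : Fin n → Bool, hammingWeight w ≤ s →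
      (2 : ℝ) ^ (-(n * binEnt δ)) ≤ bscNoiseProb δ w := by
    intro w hw
    have hk : (hammingWeight w : ℝ) ≤ δ * n := le_trans (by exact_mod_cast hw) hs
    set e := δ * n - hammingWeight w
    rw [two_rpow_neg_mul_binEnt h0 (by linarith), bscNoiseProb, prod_ite_eq_pow_hammingWeight,
      ← rpow_natCast, ← rpow_natCast, Nat.cast_sub (hammingWeight_le w),
      show (n : ℝ) * δ = hammingWeight w + e by ring, rpow_add h0,
      show (n : ℝ) - hammingWeight w = e + n * (1 - δ) by ring, rpow_add h1', mul_assoc]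
    gcongr ?_ * (?_ * _)
    exact rpow_le_rpow h0.le (by linarith) (sub_nonneg.2 hk)
  have htotal : ∑ w : Fin n → Bool, bscNoiseProb δ w = 1 := by
    simp only [bscNoiseProb, sum_prod_ite_eq_add_pow, add_sub_cancel, one_pow]
  have hcard : (#{w : Fin n → Bool | hammingWeight w ≤ s} : ℝ) * 2 ^ (-(n * binEnt δ)) ≤ 1 :=
    calc _ = ∑ w : Fin n → Bool with hammingWeight w ≤ s, (2 : ℝ) ^ (-(n * binEnt δ)) := by
          rw [sum_const, nsmul_eq_mul]
      _ ≤ ∑ w : Fin n → Bool with hammingWeight w ≤ s, bscNoiseProb δ w :=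
          sum_le_sum fun w hw => hlikely w (mem_filter.1 hw).2
      _ ≤ ∑ w : Fin n → Bool, bscNoiseProb δ w := sum_le_sum_of_subset_of_nonneg
          (filter_subset _ _) fun w _ _ => bscNoiseProb_nonneg h0.le (by linarith) w
      _ = 1 := htotal
  rwa [rpow_neg zero_le_two, ← div_eq_mul_inv, div_le_one (by positivity)] at hcard

section HammingSpace

variable {ι : Type*} [Fintype ι] {β : ι → Type*} [∀ i, DecidableEq (β i)]

theorem exists_subset_pairwise_lt_hammingDist (s V : ℕ) (D : Finset (∀ i, β i))
    (hV : ∀ x, #{y ∈ D | hammingDist x y ≤ s} ≤ V) :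
    ∃ C ⊆ D, (C : Set (∀ i, β i)).Pairwise (fun x y => s < hammingDist x y) ∧
      #D ≤ #C * V := by
  induction D using Finset.strongInduction with
  | H D ih =>
  obtain rfl | ⟨x, hx⟩ := D.eq_empty_or_nonempty
  · exact ⟨∅, empty_subset _, by simp, by simp⟩
  set B := {y ∈ D | hammingDist x y ≤ s}
  have hxB : x ∈ B := mem_filter.2 ⟨hx, by simp⟩
  obtain ⟨C, hCD, hC, hcard⟩ := ih (D \ B) (sdiff_ssubset (filter_subset _ _) ⟨x, hxB⟩)
    fun z => (card_le_card (filter_subset_filter _ sdiff_subset)).trans (hV z)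
  have hfar : ∀ y ∈ C, s < hammingDist x y := fun y hy => by
    have := mem_sdiff.1 (hCD hy)
    simpa [B, this.1] using this.2
  have hxC : x ∉ C := fun h => (mem_sdiff.1 (hCD h)).2 hxB
  refine ⟨insert x C, insert_subset hx (hCD.trans sdiff_subset), ?_, ?_⟩
  · rw [coe_insert, Set.pairwise_insert]
    exact ⟨hC, fun y hy _ => ⟨hfar y hy, hammingDist_comm x y ▸ hfar y hy⟩⟩
  · rw [card_insert_of_notMem hxC, add_one_mul, ← card_sdiff_add_card_inter D B,
      inter_eq_right.2 (filter_subset _ _)]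
    exact add_le_add hcard (hV x)

theorem exists_decoder_of_pairwise_lt_hammingDist {C : Finset (∀ i, β i)} (hC : C.Nonempty)
    {r : ℕ} (hCr : (C : Set (∀ i, β i)).Pairwise (fun x y => 2 * r < hammingDist x y)) :
    ∃ g : (∀ i, β i) → ∀ i, β i, (∀ y, g y ∈ C) ∧ ∀ x ∈ C, ∀ y, hammingDist x y ≤ r → g y = x := by
  classical
  refine ⟨fun y => if h : ∃ c ∈ C, hammingDist c y ≤ r then h.choose else hC.choose,
    fun y => ?_, fun x hx y hxy => ?_⟩
  · dsimp only
    split_ifs with h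
    exacts [h.choose_spec.1, hC.choose_spec]
  have hex : ∃ c ∈ C, hammingDist c y ≤ r := ⟨x, hx, hxy⟩
  obtain ⟨hcC, hcy⟩ := hex.choose_spec
  simp only [dif_pos hex]
  -- Two codewords within distance `r` of `y` are within `2 r` of each other.
  by_contra hne
  have := hCr hx hcC (Ne.symm hne)
  have := hammingDist_triangle x y hex.choose
  rw [hammingDist_comm y] at this
  omega

end HammingSpace

section BSC

variable {n : ℕ}

theorem card_hammingDist_le_le (x : Fin n → Bool) (D : Finset (Fin n → Bool)) (s : ℕ) :
    #{y ∈ D | hammingDist x y ≤ s} ≤ #{w : Fin n → Bool | hammingWeight w ≤ s} := by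
  refine card_le_card_of_injOn (fun y i => xor (x i) (y i)) (fun y hy => ?_) fun y _ z _ h => ?_
  · simpa [hammingWeight_xor] using (mem_filter.1 hy).2
  · funext i
    simpa using congrFun h i

theorem exists_subset_pairwise_lt_hammingDist_card_le_two_rpow {s : ℕ} {δ : ℝ} (h0 : 0 < δ)
    (h1 : δ ≤ 1 / 2) (hs : s ≤ δ * n) (D : Finset (Fin n → Bool)) :
    ∃ C ⊆ D, (C : Set (Fin n → Bool)).Pairwise (fun x y => s < hammingDist x y) ∧
      (#D : ℝ) ≤ #C * 2 ^ (n * binEnt δ) := by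
  obtain ⟨C, hCD, hC, hcard⟩ :=
    exists_subset_pairwise_lt_hammingDist s _ D fun x => card_hammingDist_le_le x D s
  refine ⟨C, hCD, hC, ?_⟩
  calc (#D : ℝ) ≤ #C * #{w : Fin n → Bool | hammingWeight w ≤ s} := by exact_mod_cast hcard
    _ ≤ #C * 2 ^ (n * binEnt δ) := by gcongr; exact card_hammingWeight_le_le_two_rpow h0 h1 hs

theorem bscErrProb_le_sum_hammingWeight_gt {pf : ℝ} (h0 : 0 ≤ pf) (h1 : pf ≤ 1)
    {g : (Fin n → Bool) → Fin n → Bool} {x : Fin n → Bool} {r : ℕ}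
    (hg : ∀ w, hammingWeight w ≤ r → g (fun i => xor (x i) (w i)) = x) :
    bscErrProb pf g x ≤ ∑ w : Fin n → Bool with r < hammingWeight w, bscNoiseProb pf w :=
  sum_le_sum_of_subset_of_nonneg
    (monotone_filter_right _ fun w _ hw => lt_of_not_ge fun h => hw (hg w h))
    fun w _ _ => bscNoiseProb_nonneg h0 h1 w

end BSC

theorem achievability_bsc_with_dictionaries_general
    (pf : ℝ) (hpf0 : 0 < pf) (hpf1 : pf < 1 / 4)
    (α : ℝ)
    (D : (n : ℕ) → Finset (Fin n → Bool))
    (hD : ∀ n : ℕ, (2 : ℝ) ^ (α * (n : ℝ)) ≤ ((D n).card : ℝ))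
    (R : ℝ) (hR : R < α - binEnt (2 * pf))
    (ε : ℝ) (hε : 0 < ε) :
    ∀ᶠ n in Filter.atTop,
      ∃ C : Finset (Fin n → Bool), C ⊆ D n ∧
        (2 : ℝ) ^ ((n : ℝ) * R) ≤ (C.card : ℝ) ∧
        ∃ g : (Fin n → Bool) → (Fin n → Bool),
          (∀ y, g y ∈ C) ∧ ∀ x ∈ C, bscErrProb pf g x < ε := by
  obtain ⟨δ, ⟨hpfδ, hδ⟩, hHδ⟩ :=
    exists_mem_Ioo_binEnt_lt (show 2 * pf < 1 / 2 by linarith) (show binEnt _ < α - R by linarith)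
  have hδ0 : 0 < δ := by linarith
  obtain ⟨ρ, hρ0, hρ1, htail⟩ := exists_sum_bscNoiseProb_hammingWeight_ge_le_pow hpf0
    (show pf < δ / 2 by linarith) (by linarith)
  filter_upwards [(tendsto_pow_atTop_nhds_zero_of_lt_one hρ0 hρ1).eventually_lt_const hε]
    with n hρn
  set r := ⌊δ * n / 2⌋₊
  have hr : (r : ℝ) ≤ δ * n / 2 := Nat.floor_le (by positivity)
  obtain ⟨C, hCD, hC, hDC⟩ := exists_subset_pairwise_lt_hammingDist_card_le_two_rpow (s := 2 * r)
    hδ0 hδ.le (by push_cast; linarith) (D n)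
  have hcard : (2 : ℝ) ^ ((n : ℝ) * R) ≤ #C := by
    refine le_of_mul_le_mul_right ?_ (rpow_pos_of_pos two_pos (n * binEnt δ))
    calc (2 : ℝ) ^ ((n : ℝ) * R) * 2 ^ (n * binEnt δ) ≤ 2 ^ (α * n) := by
          rw [← rpow_add two_pos]
          exact rpow_le_rpow_of_exponent_le one_le_two (by nlinarith [n.cast_nonneg (α := ℝ)])
      _ ≤ #C * 2 ^ (n * binEnt δ) := (hD n).trans hDC
  obtain ⟨g, hgC, hg⟩ := exists_decoder_of_pairwise_lt_hammingDist
    (card_pos.1 (by exact_mod_cast (rpow_pos_of_pos two_pos _).trans_le hcard)) hC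
  refine ⟨C, hCD, hcard, g, hgC, fun x hx => ?_⟩
  calc bscErrProb pf g x
      ≤ ∑ w : Fin n → Bool with r < hammingWeight w, bscNoiseProb pf w :=
        bscErrProb_le_sum_hammingWeight_gt hpf0.le (by linarith)
          fun w hw => hg x hx _ ((hammingDist_xor_right x w).trans_le hw)
    _ ≤ ρ ^ n := htail n (r + 1) (by push_cast; linarith [Nat.lt_floor_add_one (δ * n / 2)])
    _ < ε := hρn

theorem achievability_bsc_with_dictionaries
    (pf : ℝ) (hpf0 : 0 < pf) (hpf1 : pf < 1 / 4)
    (α : ℝ) (hα1 : binEnt (2 * pf) < α) (hα2 : α ≤ 1)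
    (D : (n : ℕ) → Finset (Fin n → Bool))
    (hD : ∀ n : ℕ, (2 : ℝ) ^ (α * (n : ℝ)) ≤ ((D n).card : ℝ))
    (R : ℝ) (hR0 : 0 < R) (hR : R < α - binEnt (2 * pf))
    (ε : ℝ) (hε : 0 < ε) :
    ∀ᶠ n in Filter.atTop,
      ∃ C : Finset (Fin n → Bool), C ⊆ D n ∧
        (2 : ℝ) ^ ((n : ℝ) * R) ≤ (C.card : ℝ) ∧
        ∃ g : (Fin n → Bool) → (Fin n → Bool),
          (∀ y, g y ∈ C) ∧ ∀ x ∈ C, bscErrProb pf g x < ε :=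
  achievability_bsc_with_dictionaries_general pf hpf0 hpf1 α D hD R hR ε hε
end

section
/- Let X and Y be finite alphabets with N := #X ≥ 2, let p_{Y|X}(y|x) be a channel transition probability, let p_X be a probability distribution on X with H(X) > 0, and define p_{XY}(x,y) = p_{Y|X}(y|x)p_X(x), with all entropies taken with logarithms to base N. Then every rate 0 < R < H(X) − H(X|Y) − H(Y|X) is achievable in the usual (unrestricted) sense: for every ε > 0 and all sufficiently large n there exist a code C_n ⊆ X^n with #C_n ≥ N^{nR} and a decoder g_n : Y^n → C_n such that max_{x ∈ C_n} P(g_n(Γ_x) ≠ x) ≤ ε. -/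
/-!
A pair `(x, y)` drawn from `p_XY^n` is typical with probability tending to one (Chebyshev):
its empirical log-likelihoods `-(1/n) log p(x, y)`, `-(1/n) log p(x)`, `-(1/n) log p(y)` are
within `δ` of `H(X, Y)`, `H(X)`, `H(Y)`. Hence the inputs whose typical outputs carry channel
probability at least `1 - ε` have `p_X^n`-mass at least `1/2`, and since each of them has
probability at most `N^(-n (H(X) - δ))` there are at least `N^(n (H(X) - δ)) / 2` of them.
An input has at most `N^(n (H(Y|X) + 2δ))` typical outputs and an output at most
`N^(n (H(X|Y) + 2δ))` typical inputs, so in the graph joining two inputs with a common typical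
output every degree is at most `N^(n (H(Y|X) + H(X|Y) + 4δ))`. A greedy independent set of this
graph is a code of size at least `N^(n (H(X) - H(X|Y) - H(Y|X) - 5δ)) / 2`, decoded by the unique
codeword typical with the received word.
-/

open scoped Classical BigOperators

open Finset Real Filter
open Function (uncurry)

section Typicality

variable {Z ι : Type*} [Fintype Z] [Fintype ι]

def mean (p f : Z → ℝ) : ℝ := ∑ z, p z * f z

def var (p f : Z → ℝ) : ℝ := ∑ z, p z * (f z - mean p f) ^ 2

/-- The positivity clause keeps the junk value `logb b 0 = 0` out of log-likelihood sums. -/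
def IsTypical {n : ℕ} (p : Z → ℝ) (f : ι → Z → ℝ) (δ : ℝ) (ω : Fin n → Z) : Prop :=
  0 < ∏ i, p (ω i) ∧ ∀ j, |∑ i, f j (ω i) - n * mean p (f j)| < n * δ

theorem sum_prod_eq_one {n : ℕ} {p : Fin n → Z → ℝ} (hp : ∀ i, ∑ z, p i z = 1) :
    ∑ ω : Fin n → Z, ∏ i, p i (ω i) = 1 := by
  simp [← Fintype.prod_sum, hp]

theorem sum_prod_mul_mul_eq {n : ℕ} {p g : Z → ℝ} (hp : ∑ z, p z = 1) (hg : mean p g = 0)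
    (i j : Fin n) :
    ∑ ω : Fin n → Z, (∏ k, p (ω k)) * (g (ω i) * g (ω j)) =
      if i = j then ∑ z, p z * g z ^ 2 else 0 := by
  have factor (ω : Fin n → Z) : (∏ k, p (ω k)) * (g (ω i) * g (ω j)) =
      ∏ k, p (ω k) * (if k = i then g (ω k) else 1) * (if k = j then g (ω k) else 1) := by
    rw [prod_mul_distrib, prod_mul_distrib, prod_ite_eq' univ i, prod_ite_eq' univ j]
    simp [mul_assoc]
  simp_rw [factor, ← Fintype.prod_sum
    (fun k z => p z * (if k = i then g z else 1) * (if k = j then g z else 1))]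
  split_ifs with hij
  · subst hij
    rw [prod_eq_single i (fun k _ hk => by simp [hk, hp]) (by simp)]
    simp [sq, mul_assoc]
  · exact prod_eq_zero (mem_univ i) (by simpa [hij, mean] using hg)

theorem sum_prod_mul_sum_sq {n : ℕ} {p g : Z → ℝ} (hp : ∑ z, p z = 1) (hg : mean p g = 0) :
    ∑ ω : Fin n → Z, (∏ k, p (ω k)) * (∑ i, g (ω i)) ^ 2 = n * ∑ z, p z * g z ^ 2 := by
  have diagonal (i : Fin n) :
      ∑ ω : Fin n → Z, ∑ j, (∏ k, p (ω k)) * (g (ω i) * g (ω j)) = ∑ z, p z * g z ^ 2 := by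
    rw [sum_comm]
    simp [sum_prod_mul_mul_eq hp hg]
  calc _ = ∑ i, ∑ ω : Fin n → Z, ∑ j, (∏ k, p (ω k)) * (g (ω i) * g (ω j)) := by
        simp_rw [sq, sum_mul_sum, mul_sum]
        exact sum_comm
    _ = _ := by simp [diagonal]

theorem mean_sub_mean_eq_zero {p : Z → ℝ} (hp : ∑ z, p z = 1) (f : Z → ℝ) :
    mean p (fun z => f z - mean p f) = 0 := by
  simp [mean, mul_sub, sum_sub_distrib, ← sum_mul, hp]

theorem sum_prod_filter_le_abs_sub_le_mul_var_div_sq {n : ℕ} {p : Z → ℝ} (hp0 : ∀ z, 0 ≤ p z)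
    (hp : ∑ z, p z = 1) (f : Z → ℝ) {t : ℝ} (ht : 0 < t) :
    ∑ ω : Fin n → Z with t ≤ |∑ i, f (ω i) - n * mean p f|, ∏ i, p (ω i) ≤ n * var p f / t ^ 2 := by
  have hsum (ω : Fin n → Z) : ∑ i, f (ω i) - n * mean p f = ∑ i, (f (ω i) - mean p f) := by
    simp [sum_sub_distrib]
  calc ∑ ω : Fin n → Z with t ≤ |∑ i, f (ω i) - n * mean p f|, ∏ i, p (ω i)
      ≤ ∑ ω : Fin n → Z with t ≤ |∑ i, f (ω i) - n * mean p f|,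
          (∏ i, p (ω i)) * (∑ i, (f (ω i) - mean p f)) ^ 2 / t ^ 2 := by
        refine sum_le_sum fun ω hω => ?_
        rw [mem_filter, hsum] at hω
        have hsq : t ^ 2 ≤ (∑ i, (f (ω i) - mean p f)) ^ 2 := by
          simpa only [sq_abs] using pow_le_pow_left₀ ht.le hω.2 2
        rw [mul_div_assoc]
        exact le_mul_of_one_le_right (prod_nonneg fun i _ => hp0 _)
          ((one_le_div (by positivity)).2 hsq)
    _ ≤ ∑ ω : Fin n → Z, (∏ i, p (ω i)) * (∑ i, (f (ω i) - mean p f)) ^ 2 / t ^ 2 := by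
        refine sum_le_sum_of_subset_of_nonneg (filter_subset _ _) fun ω _ _ => ?_
        have := prod_nonneg fun i (_ : i ∈ univ) => hp0 (ω i)
        positivity
    _ = n * var p f / t ^ 2 := by
        rw [← sum_div, sum_prod_mul_sum_sq hp (mean_sub_mean_eq_zero hp f), var]

theorem prod_le_sum_ite_of_not_isTypical {n : ℕ} {p : Z → ℝ} (hp0 : ∀ z, 0 ≤ p z)
    {f : ι → Z → ℝ} {δ : ℝ} {ω : Fin n → Z} (hω : ¬ IsTypical p f δ ω) :
    ∏ i, p (ω i) ≤
      ∑ j, if n * δ ≤ |∑ i, f j (ω i) - n * mean p (f j)| then ∏ i, p (ω i) else 0 := by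
  have hP : 0 ≤ ∏ i, p (ω i) := prod_nonneg fun i _ => hp0 _
  have hterm (j : ι) :
      0 ≤ if n * δ ≤ |∑ i, f j (ω i) - n * mean p (f j)| then ∏ i, p (ω i) else 0 := by
    split_ifs <;> simp [hP]
  by_cases hpos : 0 < ∏ i, p (ω i)
  · obtain ⟨j, hj⟩ : ∃ j, n * δ ≤ |∑ i, f j (ω i) - n * mean p (f j)| := by
      simp only [IsTypical, not_and, not_forall, not_lt] at hω
      exact hω hpos
    exact (if_pos hj).symm.trans_le (single_le_sum (fun k _ => hterm k) (mem_univ j))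
  · exact (not_lt.1 hpos).trans (sum_nonneg fun j _ => hterm j)

theorem sum_not_isTypical_le {n : ℕ} (hn : 0 < n) {p : Z → ℝ} (hp0 : ∀ z, 0 ≤ p z)
    (hp : ∑ z, p z = 1) (f : ι → Z → ℝ) {δ : ℝ} (hδ : 0 < δ) :
    ∑ ω : Fin n → Z with ¬ IsTypical p f δ ω, ∏ i, p (ω i) ≤
      (∑ j, var p (f j)) / (n * δ ^ 2) :=
  calc ∑ ω : Fin n → Z with ¬ IsTypical p f δ ω, ∏ i, p (ω i)
      ≤ ∑ ω : Fin n → Z,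
          ∑ j, if n * δ ≤ |∑ i, f j (ω i) - n * mean p (f j)| then ∏ i, p (ω i) else 0 := by
        refine (sum_le_sum fun ω hω =>
          prod_le_sum_ite_of_not_isTypical hp0 (mem_filter.1 hω).2).trans
            (sum_le_sum_of_subset_of_nonneg (filter_subset _ _) fun ω _ _ => ?_)
        exact sum_nonneg fun j _ => by split_ifs <;> simp [prod_nonneg fun i _ => hp0 (ω i)]
    _ = ∑ j, ∑ ω : Fin n → Z with n * δ ≤ |∑ i, f j (ω i) - n * mean p (f j)|,
          ∏ i, p (ω i) := by
        rw [sum_comm]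
        simp only [sum_filter]
    _ ≤ ∑ j, n * var p (f j) / (n * δ) ^ 2 :=
        sum_le_sum fun j _ =>
          sum_prod_filter_le_abs_sub_le_mul_var_div_sq hp0 hp (f j) (by positivity)
    _ = (∑ j, var p (f j)) / (n * δ ^ 2) := by
        rw [sum_div]
        refine sum_congr rfl fun j _ => ?_
        field_simp

theorem one_sub_le_sum_isTypical {n : ℕ} (hn : 0 < n) {p : Z → ℝ} (hp0 : ∀ z, 0 ≤ p z)
    (hp : ∑ z, p z = 1) (f : ι → Z → ℝ) {δ : ℝ} (hδ : 0 < δ) :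
    1 - (∑ j, var p (f j)) / (n * δ ^ 2) ≤
      ∑ ω : Fin n → Z with IsTypical p f δ ω, ∏ i, p (ω i) := by
  have htotal := sum_filter_add_sum_filter_not univ (IsTypical p f δ)
    fun ω : Fin n → Z => ∏ i, p (ω i)
  rw [sum_prod_eq_one fun _ => hp] at htotal
  linarith [sum_not_isTypical_le hn hp0 hp f hδ]

end Typicality

theorem exists_subset_pairwise_card_le {α : Type*} {r : α → α → Prop} (hr : ∀ a b, r a b → r b a)
    {B : ℝ} (G : Finset α) (hrefl : ∀ a ∈ G, r a a) (hdeg : ∀ a ∈ G, (#{b ∈ G | r a b} : ℝ) ≤ B) :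
    ∃ C ⊆ G, (#G : ℝ) ≤ B * #C ∧ ∀ a ∈ C, ∀ b ∈ C, r a b → a = b := by
  induction G using Finset.strongInduction with
  | H G ih =>
  obtain rfl | ⟨a, ha⟩ := G.eq_empty_or_nonempty
  · exact ⟨∅, by simp⟩
  -- keep `a`, discard its neighbourhood and recurse on the rest
  set G' := {b ∈ G | ¬ r a b}
  have hG' : G' ⊂ G := ssubset_iff_of_subset (filter_subset _ _) |>.2
    ⟨a, ha, fun h => (mem_filter.1 h).2 (hrefl a ha)⟩
  obtain ⟨C, hCG', hcard, hC⟩ := ih G' hG' (fun b hb => hrefl b (hG'.subset hb))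
    fun b hb => le_trans (by gcongr) (hdeg b (hG'.subset hb))
  have haC : a ∉ C := fun h => (mem_filter.1 (hCG' h)).2 (hrefl a ha)
  refine ⟨insert a C, insert_subset ha (hCG'.trans hG'.subset), ?_, ?_⟩
  · have hsplit := card_filter_add_card_filter_not (s := G) (r a)
    rw [card_insert_of_notMem haC, ← hsplit]
    push_cast
    linarith [hdeg a ha]
  · have hfar : ∀ b ∈ C, ¬ r a b := fun b hb => (mem_filter.1 (hCG' hb)).2
    simp only [mem_insert]
    rintro b (rfl | hb) c (rfl | hc) hbc
    · rfl
    · exact absurd hbc (hfar c hc)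
    · exact absurd (hr _ _ hbc) (hfar b hb)
    · exact hC b hb c hc hbc

theorem one_sub_div_le_sum_filter {U : Type*} [Fintype U] {P w : U → ℝ} (hP : ∀ u, 0 ≤ P u)
    (hPsum : ∑ u, P u = 1) (hw : ∀ u, w u ≤ 1) {η ε : ℝ} (hε : 0 < ε)
    (h : 1 - η ≤ ∑ u, P u * w u) :
    1 - η / ε ≤ ∑ u with 1 - ε ≤ w u, P u := by
  have hbad : ε * ∑ u with ¬ 1 - ε ≤ w u, P u ≤ η :=
    calc ε * ∑ u with ¬ 1 - ε ≤ w u, P u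
        ≤ ∑ u with ¬ 1 - ε ≤ w u, P u * (1 - w u) := by
          rw [mul_sum]
          refine sum_le_sum fun u hu => ?_
          nlinarith [(mem_filter.1 hu).2, hP u]
      _ ≤ ∑ u, P u * (1 - w u) :=
          sum_le_sum_of_subset_of_nonneg (filter_subset _ _) fun u _ _ =>
            mul_nonneg (hP u) (sub_nonneg.2 (hw u))
      _ ≤ η := by simp only [mul_sub, mul_one, sum_sub_distrib, hPsum]; linarith
  have htotal := sum_filter_add_sum_filter_not univ (fun u => 1 - ε ≤ w u) P
  rw [hPsum] at htotal
  have : η / ε ≥ ∑ u with ¬ 1 - ε ≤ w u, P u := by rw [ge_iff_le, le_div_iff₀ hε]; linarith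
  linarith

theorem exists_decoder {U V : Type*} [DecidableEq U] [Fintype V] {W : U → V → ℝ}
    (hW : ∀ u v, 0 ≤ W u v) (hWsum : ∀ u, ∑ v, W u v = 1) (T : U → V → Prop) {C : Finset U} (hC : C.Nonempty)
    (hdisj : ∀ u ∈ C, ∀ u' ∈ C, ∀ v, T u v → T u' v → u = u') :
    ∃ g : V → U, (∀ v, g v ∈ C) ∧
      ∀ u ∈ C, ∑ v with g v ≠ u, W u v ≤ 1 - ∑ v with T u v, W u v := by
  let g (v : V) : U := if h : ∃ u ∈ C, T u v then h.choose else hC.choose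
  have hgC (v : V) : g v ∈ C := by
    by_cases h : ∃ u ∈ C, T u v
    · simpa [g, h] using h.choose_spec.1
    · simpa [g, h] using hC.choose_spec
  have hg (u : U) (hu : u ∈ C) (v : V) (huv : T u v) : g v = u := by
    have h : ∃ u ∈ C, T u v := ⟨u, hu, huv⟩
    simpa [g, h] using hdisj _ h.choose_spec.1 u hu v h.choose_spec.2 huv
  refine ⟨g, hgC, fun u hu => ?_⟩
  have hsplit := sum_filter_add_sum_filter_not univ (T u) (W u)
  rw [hWsum] at hsplit
  calc ∑ v with g v ≠ u, W u v ≤ ∑ v with ¬ T u v, W u v :=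
        sum_le_sum_of_subset_of_nonneg
          (fun v hv => by
            simp only [mem_filter, mem_univ, true_and] at hv ⊢
            exact fun huv => hv (hg u hu v huv))
          fun v _ _ => hW u v
    _ = 1 - ∑ v with T u v, W u v := by linarith

theorem card_filter_exists_common_le {U V : Type*} [Fintype U] [Fintype V] {T : U → V → Prop}
    {β γ : ℝ} (hβ : ∀ u, (#{v | T u v} : ℝ) ≤ β) (hγ : ∀ v, (#{u | T u v} : ℝ) ≤ γ)
    (hγ0 : 0 ≤ γ) (G : Finset U) (u : U) :
    (#{u' ∈ G | ∃ v, T u v ∧ T u' v} : ℝ) ≤ β * γ := by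
  have hsub : {u' ∈ G | ∃ v, T u v ∧ T u' v} ⊆ ({v | T u v} : Finset V).biUnion
      fun v => {u' | T u' v} := by
    intro u' hu'
    obtain ⟨v, huv, hu'v⟩ := (mem_filter.1 hu').2
    exact mem_biUnion.2 ⟨v, by simpa using huv, by simpa using hu'v⟩
  calc (#{u' ∈ G | ∃ v, T u v ∧ T u' v} : ℝ)
      ≤ ∑ v with T u v, (#{u' | T u' v} : ℝ) := by
        exact_mod_cast (card_le_card hsub).trans card_biUnion_le
    _ ≤ ∑ v with T u v, γ := sum_le_sum fun v _ => hγ v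
    _ ≤ β * γ := by
        rw [sum_const, nsmul_eq_mul]
        exact mul_le_mul_of_nonneg_right (hβ u) hγ0

theorem exists_subset_card_ge_of_typical {U V : Type*} [Fintype U] [Fintype V]
    {P : U → ℝ} (hP : ∀ u, 0 ≤ P u) (hPsum : ∑ u, P u = 1)
    {W : U → V → ℝ} (hW : ∀ u v, 0 ≤ W u v) (hWsum : ∀ u, ∑ v, W u v = 1)
    (T : U → V → Prop) {ε η α : ℝ} (hε : 0 < ε) (hε1 : ε < 1)
    (htyp : 1 - η ≤ ∑ u, P u * ∑ v with T u v, W u v) (hα : ∀ u v, T u v → P u ≤ α) :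
    ∃ G : Finset U, 1 - η / ε ≤ α * #G ∧
      ∀ u ∈ G, (∃ v, T u v) ∧ 1 - ε ≤ ∑ v with T u v, W u v := by
  have hw1 (u : U) : ∑ v with T u v, W u v ≤ 1 := (hWsum u).symm ▸
    sum_le_sum_of_subset_of_nonneg (filter_subset _ _) fun v _ _ => hW u v
  set G : Finset U := {u | 1 - ε ≤ ∑ v with T u v, W u v}
  have hGtyp (u : U) (hu : u ∈ G) : ∃ v, T u v := by
    by_contra! h
    have : ∑ v with T u v, W u v = 0 := sum_eq_zero fun v hv => absurd (mem_filter.1 hv).2 (h v)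
    linarith [(mem_filter.1 hu).2]
  refine ⟨G, ?_, fun u hu => ⟨hGtyp u hu, (mem_filter.1 hu).2⟩⟩
  calc 1 - η / ε ≤ ∑ u ∈ G, P u := one_sub_div_le_sum_filter hP hPsum hw1 hε htyp
    _ ≤ ∑ u ∈ G, α := sum_le_sum fun u hu => (hGtyp u hu).elim fun v => hα u v
    _ = α * #G := by rw [sum_const, nsmul_eq_mul, mul_comm]

theorem exists_code_of_typical {U V : Type*} [Fintype U] [DecidableEq U] [Fintype V]
    {P : U → ℝ} (hP : ∀ u, 0 ≤ P u) (hPsum : ∑ u, P u = 1)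
    {W : U → V → ℝ} (hW : ∀ u v, 0 ≤ W u v) (hWsum : ∀ u, ∑ v, W u v = 1)
    (T : U → V → Prop) {ε η α β γ : ℝ} (hε : 0 < ε) (hε1 : ε < 1) (hη : η < ε)
    (htyp : 1 - η ≤ ∑ u, P u * ∑ v with T u v, W u v)
    (hα : ∀ u v, T u v → P u ≤ α)
    (hβ : ∀ u, (#{v | T u v} : ℝ) ≤ β) (hγ : ∀ v, (#{u | T u v} : ℝ) ≤ γ) :
    ∃ C : Finset U, 1 - η / ε ≤ α * β * γ * #C ∧
      ∃ g : V → U, (∀ v, g v ∈ C) ∧ ∀ u ∈ C, ∑ v with g v ≠ u, W u v ≤ ε := by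
  have hpos : 0 < 1 - η / ε := by rw [sub_pos, div_lt_one hε]; exact hη
  obtain ⟨G, hG, hGtyp⟩ := exists_subset_card_ge_of_typical hP hPsum hW hWsum T hε hε1 htyp hα
  obtain ⟨u₀, hu₀⟩ : G.Nonempty := card_pos.1 <| Nat.pos_of_ne_zero fun h => by
    simp only [h, Nat.cast_zero, mul_zero] at hG
    linarith
  obtain ⟨v₀, hu₀v₀⟩ := (hGtyp u₀ hu₀).1
  have hα0 : 0 ≤ α := (hP u₀).trans (hα u₀ v₀ hu₀v₀)
  have hγ0 : 0 ≤ γ := (Nat.cast_nonneg _).trans (hγ v₀)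
  obtain ⟨C, hCG, hCcard, hCdisj⟩ := exists_subset_pairwise_card_le
    (r := fun u u' => ∃ v, T u v ∧ T u' v) (B := β * γ)
    (fun _ _ ⟨v, h, h'⟩ => ⟨v, h', h⟩) G
    (fun u hu => (hGtyp u hu).1.elim fun v h => ⟨v, h, h⟩)
    (fun u _ => by convert card_filter_exists_common_le hβ hγ hγ0 G u)
  have hcard : 1 - η / ε ≤ α * β * γ * #C := by nlinarith
  have hC : C.Nonempty := card_pos.1 <| Nat.pos_of_ne_zero fun h => by
    simp only [h, Nat.cast_zero, mul_zero] at hcard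
    linarith
  obtain ⟨g, hgC, herr⟩ := exists_decoder hW hWsum T hC
    fun u hu u' hu' v huv hu'v => hCdisj u hu u' hu' ⟨v, huv, hu'v⟩
  refine ⟨C, hcard, g, hgC, fun u hu => (herr u hu).trans ?_⟩
  linarith [(hGtyp u (hCG hu)).2]

theorem sum_arrow_prod {X Y : Type*} [Fintype X] [Fintype Y] {n : ℕ}
    (F : (Fin n → X × Y) → ℝ) :
    ∑ ω, F ω = ∑ x : Fin n → X, ∑ y : Fin n → Y, F fun i => (x i, y i) := by
  rw [← Fintype.sum_prod_type']
  exact Fintype.sum_equiv (Equiv.arrowProdEquivProdArrow (Fin n) (fun _ => X) (fun _ => Y)) _ _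
    fun _ => rfl

theorem rpow_le_prod_and_prod_le_rpow {n : ℕ} {b μ δ : ℝ} (hb : 1 < b) {t : Fin n → ℝ}
    (ht : ∀ i, 0 < t i) (h : |∑ i, logb b (t i) - n * μ| < n * δ) :
    b ^ (n * (μ - δ)) ≤ ∏ i, t i ∧ ∏ i, t i ≤ b ^ (n * (μ + δ)) := by
  have hprod : ∏ i, t i = b ^ ∑ i, logb b (t i) := by
    rw [rpow_sum_of_pos (by linarith)]
    exact prod_congr rfl fun i _ => (rpow_logb (by linarith) hb.ne' (ht i)).symm
  obtain ⟨hlo, hhi⟩ := abs_lt.1 h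
  rw [hprod]
  constructor <;> apply rpow_le_rpow_of_exponent_le hb.le <;> linarith

theorem card_le_rpow_sub {ι : Type*} {S : Finset ι} {f : ι → ℝ} {b c d : ℝ} (hb : 0 < b)
    (hf : ∀ s ∈ S, b ^ c ≤ f s) (hsum : ∑ s ∈ S, f s ≤ b ^ d) : (#S : ℝ) ≤ b ^ (d - c) := by
  rw [rpow_sub hb, le_div_iff₀ (rpow_pos_of_pos hb c), ← nsmul_eq_mul]
  exact (card_nsmul_le_sum S f _ hf).trans hsum

section JointTypicality

variable {X Y : Type*} [Fintype X] [Fintype Y]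

noncomputable def logLik (b : ℝ) (pX : X → ℝ) (pXY : X → Y → ℝ) (pY : Y → ℝ) : Fin 3 → X × Y → ℝ :=
  ![fun z => logb b (pXY z.1 z.2), fun z => logb b (pX z.1), fun z => logb b (pY z.2)]

def JointlyTypical {n : ℕ} (b δ : ℝ) (pX : X → ℝ) (pXY : X → Y → ℝ) (pY : Y → ℝ)
    (x : Fin n → X) (y : Fin n → Y) : Prop :=
  IsTypical (uncurry pXY) (logLik b pX pXY pY) δ fun i => (x i, y i)

theorem JointlyTypical.bounds {n : ℕ} {b δ : ℝ} {pX : X → ℝ} {pXY : X → Y → ℝ} {pY : Y → ℝ}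
    (hb : 1 < b) (hpXY0 : ∀ x y, 0 ≤ pXY x y) (hpX : ∀ x, pX x = ∑ y, pXY x y)
    (hpY : ∀ y, pY y = ∑ x, pXY x y) {x : Fin n → X} {y : Fin n → Y}
    (h : JointlyTypical b δ pX pXY pY x y) :
    b ^ (n * (mean (uncurry pXY) (logLik b pX pXY pY 0) - δ)) ≤ ∏ i, pXY (x i) (y i) ∧
      ∏ i, pX (x i) ≤ b ^ (n * (mean (uncurry pXY) (logLik b pX pXY pY 1) + δ)) ∧
      ∏ i, pY (y i) ≤ b ^ (n * (mean (uncurry pXY) (logLik b pX pXY pY 2) + δ)) := by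
  obtain ⟨hprod, hdev⟩ := h
  have hpos (i : Fin n) : 0 < pXY (x i) (y i) := by
    refine (hpXY0 _ _).lt_of_ne fun h0 => hprod.ne' (prod_eq_zero (mem_univ i) ?_)
    simp [← h0]
  have hpXpos (i : Fin n) : 0 < pX (x i) :=
    hpX (x i) ▸ (hpos i).trans_le (single_le_sum (fun y _ => hpXY0 _ y) (mem_univ _))
  have hpYpos (i : Fin n) : 0 < pY (y i) :=
    hpY (y i) ▸ (hpos i).trans_le (single_le_sum (fun x _ => hpXY0 x _) (mem_univ _))
  exact ⟨(rpow_le_prod_and_prod_le_rpow hb hpos (by simpa [logLik] using hdev 0)).1,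
    (rpow_le_prod_and_prod_le_rpow hb hpXpos (by simpa [logLik] using hdev 1)).2,
    (rpow_le_prod_and_prod_le_rpow hb hpYpos (by simpa [logLik] using hdev 2)).2⟩

theorem card_jointlyTypical_right_le {n : ℕ} {b δ : ℝ} {pX : X → ℝ} {pXY : X → Y → ℝ}
    {pY : Y → ℝ} (hb : 1 < b) (hpXY0 : ∀ x y, 0 ≤ pXY x y) (hpX : ∀ x, pX x = ∑ y, pXY x y)
    (hpY : ∀ y, pY y = ∑ x, pXY x y) (x : Fin n → X) :
    (#{y | JointlyTypical b δ pX pXY pY x y} : ℝ) ≤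
      b ^ (n * (mean (uncurry pXY) (logLik b pX pXY pY 1) + δ) -
        n * (mean (uncurry pXY) (logLik b pX pXY pY 0) - δ)) := by
  obtain hS | ⟨y₀, hy₀⟩ :=
    (univ.filter fun y => JointlyTypical b δ pX pXY pY x y).eq_empty_or_nonempty
  · simp [hS, rpow_nonneg (by linarith : (0 : ℝ) ≤ b)]
  refine card_le_rpow_sub (by linarith)
    (fun y hy => ((mem_filter.1 hy).2.bounds hb hpXY0 hpX hpY).1) ?_
  calc ∑ y : Fin n → Y with JointlyTypical b δ pX pXY pY x y, ∏ i, pXY (x i) (y i)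
      ≤ ∑ y : Fin n → Y, ∏ i, pXY (x i) (y i) :=
        sum_le_sum_of_subset_of_nonneg (filter_subset _ _) fun y _ _ =>
          prod_nonneg fun i _ => hpXY0 _ _
    _ = ∏ i, pX (x i) := by simp_rw [← Fintype.prod_sum, hpX]
    _ ≤ _ := ((mem_filter.1 hy₀).2.bounds hb hpXY0 hpX hpY).2.1

theorem card_jointlyTypical_left_le {n : ℕ} {b δ : ℝ} {pX : X → ℝ} {pXY : X → Y → ℝ}
    {pY : Y → ℝ} (hb : 1 < b) (hpXY0 : ∀ x y, 0 ≤ pXY x y) (hpX : ∀ x, pX x = ∑ y, pXY x y)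
    (hpY : ∀ y, pY y = ∑ x, pXY x y) (y : Fin n → Y) :
    (#{x | JointlyTypical b δ pX pXY pY x y} : ℝ) ≤
      b ^ (n * (mean (uncurry pXY) (logLik b pX pXY pY 2) + δ) -
        n * (mean (uncurry pXY) (logLik b pX pXY pY 0) - δ)) := by
  obtain hS | ⟨x₀, hx₀⟩ :=
    (univ.filter fun x => JointlyTypical b δ pX pXY pY x y).eq_empty_or_nonempty
  · simp [hS, rpow_nonneg (by linarith : (0 : ℝ) ≤ b)]
  refine card_le_rpow_sub (by linarith)
    (fun x hx => ((mem_filter.1 hx).2.bounds hb hpXY0 hpX hpY).1) ?_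
  calc ∑ x : Fin n → X with JointlyTypical b δ pX pXY pY x y, ∏ i, pXY (x i) (y i)
      ≤ ∑ x : Fin n → X, ∏ i, pXY (x i) (y i) :=
        sum_le_sum_of_subset_of_nonneg (filter_subset _ _) fun x _ _ =>
          prod_nonneg fun i _ => hpXY0 _ _
    _ = ∏ i, pY (y i) := by simp_rw [← Fintype.prod_sum fun i x => pXY x (y i), hpY]
    _ ≤ _ := ((mem_filter.1 hx₀).2.bounds hb hpXY0 hpX hpY).2.2

theorem one_sub_le_sum_jointlyTypical {n : ℕ} (hn : 0 < n) {b δ : ℝ} (hδ : 0 < δ)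
    {pYX : X → Y → ℝ} {pX : X → ℝ} {pXY : X → Y → ℝ} {pY : Y → ℝ}
    (hpXY0 : ∀ x y, 0 ≤ pXY x y) (hsum : ∑ x, ∑ y, pXY x y = 1)
    (hpXY : ∀ x y, pXY x y = pYX x y * pX x) :
    1 - (∑ j, var (uncurry pXY) (logLik b pX pXY pY j)) / (n * δ ^ 2) ≤
      ∑ x : Fin n → X, (∏ i, pX (x i)) *
        ∑ y : Fin n → Y with JointlyTypical b δ pX pXY pY x y, ∏ i, pYX (x i) (y i) := by
  have hfactor (x : Fin n → X) (y : Fin n → Y) :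
      (∏ i, pX (x i)) * ∏ i, pYX (x i) (y i) = ∏ i, uncurry pXY (x i, y i) := by
    rw [← prod_mul_distrib]
    exact prod_congr rfl fun i _ => by simp [hpXY, mul_comm]
  have hp0 (z : X × Y) : 0 ≤ uncurry pXY z := hpXY0 z.1 z.2
  have hp : ∑ z, uncurry pXY z = 1 := by rwa [Fintype.sum_prod_type]
  refine (one_sub_le_sum_isTypical hn hp0 hp (logLik b pX pXY pY) hδ).trans (le_of_eq ?_)
  rw [sum_filter, sum_arrow_prod]
  refine sum_congr rfl fun x _ => ?_
  rw [mul_sum, sum_filter]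
  refine sum_congr rfl fun y _ => ?_
  unfold JointlyTypical
  split_ifs
  · exact (hfactor x y).symm
  · rfl

theorem exists_code_of_jointlyTypical {n : ℕ} (hn : 0 < n) {b δ ε : ℝ} (hb : 1 < b)
    (hδ : 0 < δ) (hε : 0 < ε) (hε1 : ε < 1)
    {pYX : X → Y → ℝ} {pX : X → ℝ} {pXY : X → Y → ℝ} {pY : Y → ℝ}
    (hpYX0 : ∀ x y, 0 ≤ pYX x y) (hpYXsum : ∀ x, ∑ y, pYX x y = 1)
    (hpX0 : ∀ x, 0 ≤ pX x) (hpXsum : ∑ x, pX x = 1)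
    (hpXY : ∀ x y, pXY x y = pYX x y * pX x) (hpY : ∀ y, pY y = ∑ x, pXY x y)
    (hvar : (∑ j, var (uncurry pXY) (logLik b pX pXY pY j)) / (n * δ ^ 2) < ε) :
    ∃ C : Finset (Fin n → X),
      1 - (∑ j, var (uncurry pXY) (logLik b pX pXY pY j)) / (n * δ ^ 2) / ε ≤
        b ^ (-(n * (2 * mean (uncurry pXY) (logLik b pX pXY pY 0) -
          2 * mean (uncurry pXY) (logLik b pX pXY pY 1) -
          mean (uncurry pXY) (logLik b pX pXY pY 2) - 5 * δ))) * #C ∧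
      ∃ g : (Fin n → Y) → Fin n → X, (∀ y, g y ∈ C) ∧
        ∀ x ∈ C, ∑ y : Fin n → Y with g y ≠ x, ∏ i, pYX (x i) (y i) ≤ ε := by
  have hpXY0 (x : X) (y : Y) : 0 ≤ pXY x y := hpXY x y ▸ mul_nonneg (hpYX0 x y) (hpX0 x)
  have hpX (x : X) : pX x = ∑ y, pXY x y := by simp [hpXY, ← sum_mul, hpYXsum]
  obtain ⟨C, hC, code⟩ := exists_code_of_typical (U := Fin n → X) (V := Fin n → Y)
    (P := fun x => ∏ i, pX (x i)) (W := fun x y => ∏ i, pYX (x i) (y i))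
    (fun x => prod_nonneg fun i _ => hpX0 _) (sum_prod_eq_one fun _ => hpXsum)
    (fun x y => prod_nonneg fun i _ => hpYX0 _ _) (fun x => sum_prod_eq_one fun i => hpYXsum _)
    (JointlyTypical b δ pX pXY pY) hε hε1 hvar
    (one_sub_le_sum_jointlyTypical hn hδ hpXY0 (by simp [← hpX, hpXsum]) hpXY)
    (fun x y h => (h.bounds hb hpXY0 hpX hpY).2.1)
    (card_jointlyTypical_right_le hb hpXY0 hpX hpY) (card_jointlyTypical_left_le hb hpXY0 hpX hpY)
  refine ⟨C, hC.trans_eq ?_, code⟩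
  rw [← rpow_add (by linarith), ← rpow_add (by linarith)]
  congr 2
  ring

end JointTypicality

section Entropy

variable {X Y : Type*} [Fintype X] [Fintype Y] {b : ℝ} {pX : X → ℝ} {pXY : X → Y → ℝ}

theorem mean_logLik_one (pY : Y → ℝ) (hpX : ∀ x, pX x = ∑ y, pXY x y) :
    mean (uncurry pXY) (logLik b pX pXY pY 1) = ∑ x, pX x * logb b (pX x) := by
  rw [mean, Fintype.sum_prod_type]
  refine sum_congr rfl fun x _ => ?_
  simp [logLik, ← sum_mul, ← hpX]

theorem mean_logLik_zero_sub_one {pYX : X → Y → ℝ} (pY : Y → ℝ)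
    (hpXY : ∀ x y, pXY x y = pYX x y * pX x) :
    mean (uncurry pXY) (logLik b pX pXY pY 0) -
        mean (uncurry pXY) (logLik b pX pXY pY 1) =
      ∑ x, ∑ y, pXY x y * logb b (pYX x y) := by
  simp only [mean, Fintype.sum_prod_type, ← sum_sub_distrib]
  refine sum_congr rfl fun x _ => sum_congr rfl fun y _ => ?_
  by_cases h0 : pXY x y = 0
  · simp [h0]
  have hmul := hpXY x y
  rw [hmul] at h0
  simp only [Function.uncurry_apply_pair, hmul, logLik, Matrix.cons_val', Matrix.cons_val_fin_one,
    Matrix.cons_val_zero, Matrix.cons_val_one,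
    logb_mul (left_ne_zero_of_mul h0) (right_ne_zero_of_mul h0)]
  ring

theorem mean_logLik_zero_sub_two {pY : Y → ℝ} (hpXY0 : ∀ x y, 0 ≤ pXY x y)
    (hpY : ∀ y, pY y = ∑ x, pXY x y) :
    mean (uncurry pXY) (logLik b pX pXY pY 0) -
        mean (uncurry pXY) (logLik b pX pXY pY 2) =
      ∑ x, ∑ y, pXY x y * logb b (pXY x y / pY y) := by
  simp only [mean, Fintype.sum_prod_type, ← sum_sub_distrib]
  refine sum_congr rfl fun x _ => sum_congr rfl fun y _ => ?_
  rcases (hpXY0 x y).eq_or_lt with h0 | hpos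
  · simp [← h0]
  have hpY0 : 0 < pY y := hpY y ▸ hpos.trans_le (single_le_sum (fun x _ => hpXY0 x y) (mem_univ x))
  simp only [Function.uncurry_apply_pair, logLik, Matrix.cons_val', Matrix.cons_val_fin_one,
    Matrix.cons_val_zero, Matrix.cons_val, Matrix.cons_val_one, logb_div hpos.ne' hpY0.ne']
  ring

end Entropy

theorem rpow_le_of_half_le_rpow_neg_add_mul {b s t c : ℝ} (hb : 2 ≤ b) (ht : 1 ≤ t)
    (h : 1 / 2 ≤ b ^ (-(s + t)) * c) : b ^ s ≤ c := by
  have hb0 : 0 < b := by linarith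
  have h2 : 2 ≤ b ^ t := hb.trans (by simpa using rpow_le_rpow_of_exponent_le (by linarith) ht)
  have hc : b ^ (s + t) ≤ 2 * c := by
    have := mul_le_mul_of_nonneg_left h (rpow_pos_of_pos hb0 (s + t)).le
    rw [← mul_assoc, ← rpow_add hb0, add_neg_cancel, rpow_zero] at this
    linarith
  rw [rpow_add hb0] at hc
  nlinarith [rpow_pos_of_pos hb0 s]

theorem eventually_one_le_mul_and_div_le {δ V ε : ℝ} (hδ : 0 < δ) (hε : 0 < ε) :
    ∀ᶠ n : ℕ in atTop, 0 < n ∧ 1 ≤ n * δ ∧ V / (n * δ ^ 2) ≤ ε / 2 := by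
  filter_upwards [eventually_ge_atTop 1,
    tendsto_natCast_atTop_atTop.eventually_ge_atTop (1 / δ),
    tendsto_natCast_atTop_atTop.eventually_ge_atTop (2 * V / (δ ^ 2 * ε))] with n hn hnδ hnV
  refine ⟨hn, by rwa [div_le_iff₀ hδ] at hnδ, ?_⟩
  have hn0 : (0 : ℝ) < n := by exact_mod_cast hn
  rw [div_le_iff₀ (by positivity)] at hnV ⊢
  linarith

theorem achievability_general_channels_unrestricted_general
    {X Y : Type} [Fintype X] [Fintype Y]
    (N : ℕ) (hN2 : 2 ≤ N)
    (pYX : X → Y → ℝ)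
    (hpYXnn : ∀ x y, 0 ≤ pYX x y) (hpYXsum : ∀ x, ∑ y, pYX x y = 1)
    (pX : X → ℝ) (hpXnn : ∀ x, 0 ≤ pX x) (hpXsum : ∑ x, pX x = 1)
    (pXY : X → Y → ℝ) (hpXY : ∀ x y, pXY x y = pYX x y * pX x)
    (pY : Y → ℝ) (hpY : ∀ y, pY y = ∑ x, pXY x y)
    (HX HYX HXgY : ℝ)
    (hHX : HX = -∑ x, pX x * Real.logb N (pX x))
    (hHYX : HYX = -∑ x, ∑ y, pXY x y * Real.logb N (pYX x y))
    (hHXgY : HXgY = -∑ x, ∑ y, pXY x y * Real.logb N (pXY x y / pY y))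
    (R : ℝ) (hR : R < HX - HXgY - HYX)
    (ε : ℝ) (hε : 0 < ε) :
    ∀ᶠ n in Filter.atTop,
      ∃ C : Finset (Fin n → X),
        (N : ℝ) ^ ((n : ℝ) * R) ≤ (C.card : ℝ) ∧
        ∃ g : (Fin n → Y) → (Fin n → X), (∀ y, g y ∈ C) ∧
          ∀ x ∈ C,
            (∑ y ∈ Finset.univ.filter fun y : Fin n → Y => g y ≠ x,
              ∏ i, pYX (x i) (y i)) ≤ ε := by
  have hb : (2 : ℝ) ≤ N := by exact_mod_cast hN2
  have hpXY0 (x : X) (y : Y) : 0 ≤ pXY x y := hpXY x y ▸ mul_nonneg (hpYXnn x y) (hpXnn x)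
  have hpX (x : X) : pX x = ∑ y, pXY x y := by simp [hpXY, ← sum_mul, hpYXsum]
  have hgap : HX - HXgY - HYX = 2 * mean (uncurry pXY) (logLik N pX pXY pY 0) -
      2 * mean (uncurry pXY) (logLik N pX pXY pY 1) -
        mean (uncurry pXY) (logLik N pX pXY pY 2) := by
    rw [hHX, hHYX, hHXgY, ← mean_logLik_one pY hpX, ← mean_logLik_zero_sub_one pY hpXY,
      ← mean_logLik_zero_sub_two hpXY0 hpY]
    ring
  -- five of the six `δ`s are lost in the counting bounds, the sixth absorbs the factor `1/2`
  set δ := (HX - HXgY - HYX - R) / 6 with hδ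
  have hδ0 : 0 < δ := by linarith
  set ε' := min ε (1 / 2)
  have hε' : 0 < ε' := lt_min hε (by norm_num)
  filter_upwards [eventually_one_le_mul_and_div_le (V :=
    ∑ j, var (uncurry pXY) (logLik N pX pXY pY j)) hδ0 hε'] with n ⟨hn, hnδ, hη⟩
  obtain ⟨C, hC, g, hgC, herr⟩ := exists_code_of_jointlyTypical (b := N) (ε := ε') hn
    (by linarith) hδ0 hε' ((min_le_right _ _).trans_lt (by norm_num)) hpYXnn hpYXsum hpXnn hpXsum
    hpXY hpY (by linarith)
  rw [← hgap, show HX - HXgY - HYX - 5 * δ = R + δ by rw [hδ]; ring, mul_add] at hC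
  have hη' : _ / ε' ≤ 1 / 2 := (div_le_iff₀ hε').2 (hη.trans_eq (by ring))
  exact ⟨C, rpow_le_of_half_le_rpow_neg_add_mul hb hnδ (by linarith), g, hgC,
    fun x hx => (herr x hx).trans (min_le_left _ _)⟩

theorem achievability_general_channels_unrestricted
    {X Y : Type} [Fintype X] [Fintype Y] [Nonempty X] [Nonempty Y]
    (N : ℕ) (hNcard : N = Fintype.card X) (hN2 : 2 ≤ N)
    (pYX : X → Y → ℝ)
    (hpYXnn : ∀ x y, 0 ≤ pYX x y) (hpYXsum : ∀ x, ∑ y, pYX x y = 1)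
    (pX : X → ℝ) (hpXnn : ∀ x, 0 ≤ pX x) (hpXsum : ∑ x, pX x = 1)
    (pXY : X → Y → ℝ) (hpXY : ∀ x y, pXY x y = pYX x y * pX x)
    (pY : Y → ℝ) (hpY : ∀ y, pY y = ∑ x, pXY x y)
    (HX HYX HXgY : ℝ)
    (hHX : HX = -∑ x, pX x * Real.logb N (pX x))
    (hHYX : HYX = -∑ x, ∑ y, pXY x y * Real.logb N (pYX x y))
    (hHXgY : HXgY = -∑ x, ∑ y, pXY x y * Real.logb N (pXY x y / pY y))
    (hHXpos : 0 < HX)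
    (R : ℝ) (hR0 : 0 < R) (hR : R < HX - HXgY - HYX)
    (ε : ℝ) (hε : 0 < ε) :
    ∀ᶠ n in Filter.atTop,
      ∃ C : Finset (Fin n → X),
        (N : ℝ) ^ ((n : ℝ) * R) ≤ (C.card : ℝ) ∧
        ∃ g : (Fin n → Y) → (Fin n → X), (∀ y, g y ∈ C) ∧
          ∀ x ∈ C,
            (∑ y ∈ Finset.univ.filter fun y : Fin n → Y => g y ≠ x,
              ∏ i, pYX (x i) (y i)) ≤ ε :=
  achievability_general_channels_unrestricted_general N hN2 pYX hpYXnn hpYXsum pX hpXnn hpXsum pXY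
    hpXY pY hpY HX HYX HXgY hHX hHYX hHXgY R hR ε hε
end
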